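/- Let θ > 0 and c > −1 be real and N ≥ 1 an integer, and define q_N(y) = (−1)^N Γ(θ N + c + 1) ∑_{l=0}^{N} (−1)^l (N choose l) y^l / Γ(θ l + c + 1). Then for every real x, ∫_{(0,∞)^N} (∏_{l=1}^N (x − λ_l^θ)) · (∏_{l=1}^N λ_l^c e^{−λ_l}) · ∏_{1≤j<k≤N} (λ_k − λ_j)(λ_k^θ − λ_j^θ) dλ_1⋯dλ_N = N! · (∏_{l=1}^N Γ(θ(l−1) + c + 1)) · θ^{N(N−1)/2} · (∏_{l=1}^{N−1} l!) · q_N(x). In particular, the average of the characteristic polynomial ∏_{l=1}^N (x − λ_l^θ) with respect to the Laguerre Muttalib–Borodin ensemble equals q_N(x). -/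

import Mathlib

/-!
Writing `μ_l = λ_l ^ θ`, the product `∏ (x - μ_l) · ∏_{j<k} (μ_k - μ_j)` is the Vandermonde
determinant of `(μ_1, …, μ_N, x)`. Expanding it along the row of `x` turns the integrand into
`∑_j (-1)^(N+j) x^j det[w(λ_i) λ_i^k] det[μ_i^m]_{m ≠ j}` with `w(t) = t^c e^{-t}`.
By Andréief's identity each term integrates to `N!` times the determinant of the moments
`∫ w(t) t^k t^{θm} dt = Γ(θm + c + 1 + k)`. Since `Γ(z + k) / Γ(z)` is a monic polynomial
of degree `k` in `z`, `det[Γ(z_i + k)] = ∏ Γ(z_i) · Δ(z)`. With `z_m = θm + c + 1`,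
`m ∈ {0,…,N} \ {j}`, the Vandermonde `Δ(z)` equals `θ^(N(N-1)/2) (∏_{l<N} l!) (N choose j)`,
and the Gamma factors complete to the coefficients of `q_N`.
-/

open MeasureTheory Finset Nat Equiv Polynomial Matrix

namespace Fin

theorem prod_Ioi_eq_prod_ite {M : Type*} [CommMonoid M] {n : ℕ} (a : Fin n) (f : Fin n → M) :
    ∏ b ∈ Ioi a, f b = ∏ b, if a < b then f b else 1 := by
  rw [prod_ite, prod_const_one, mul_one, filter_lt_eq_Ioi]

theorem prod_Iio_eq_prod_ite {M : Type*} [CommMonoid M] {n : ℕ} (a : Fin n) (f : Fin n → M) :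
    ∏ b ∈ Iio a, f b = ∏ b, if b < a then f b else 1 := by
  rw [prod_ite, prod_const_one, mul_one, filter_gt_eq_Iio]

theorem prod_prod_Ioi_succAbove {M : Type*} [CommMonoid M] {n : ℕ}
    (F : Fin (n + 1) → Fin (n + 1) → M) (j : Fin (n + 1)) :
    ∏ a, ∏ b ∈ Ioi a, F a b =
      (∏ a, ∏ b ∈ Ioi a, F (j.succAbove a) (j.succAbove b)) *
        ((∏ a ∈ Iio j, F a j) * ∏ b ∈ Ioi j, F j b) := by
  simp only [prod_Ioi_eq_prod_ite, prod_Iio_eq_prod_ite, prod_univ_succAbove _ j,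
    succAbove_lt_succAbove_iff, lt_irrefl, if_false, prod_mul_distrib, one_mul]
  ac_rfl

theorem prod_val_succAbove_mul {M : Type*} [CommMonoid M] {n : ℕ} (F : ℕ → M)
    (j : Fin (n + 1)) :
    (∏ i : Fin n, F (j.succAbove i)) * F j = (∏ i : Fin n, F i) * F n := by
  have h := prod_univ_succAbove (fun i : Fin (n + 1) => F i) j
  rw [prod_univ_castSucc] at h
  simpa [mul_comm] using h.symm

theorem prod_Iio_sub_eq_factorial {R : Type*} [CommRing R] {n : ℕ} (j : Fin n) :
    ∏ i ∈ Iio j, (((j : ℕ) : R) - (i : ℕ)) = ((j : ℕ)! : R) := by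
  rw [← Nat.descFactorial_self, Nat.descFactorial_eq_prod_range, ← Nat.Iio_eq_range,
    ← map_valEmbedding_Iio, prod_map, Nat.cast_prod]
  exact prod_congr rfl fun i hi => (Nat.cast_sub (mem_Iio.mp hi).le).symm

theorem prod_Ioi_sub_eq_factorial {R : Type*} [CommRing R] {n : ℕ} (j : Fin (n + 1)) :
    ∏ i ∈ Ioi j, (((i : ℕ) : R) - (j : ℕ)) = ((n - j : ℕ)! : R) := by
  have hrev : n - (j : ℕ) = (rev j : ℕ) := by simp [val_rev]
  rw [hrev, ← prod_Iio_sub_eq_factorial, ← rev_rev j, ← finsetImage_rev_Iio, rev_rev,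
    prod_image (fun a _ b _ => rev_inj.mp)]
  refine prod_congr rfl fun i _ => ?_
  simp only [val_rev]
  push_cast [Nat.lt_succ_iff.mp i.isLt, Nat.lt_succ_iff.mp j.isLt]
  ring

end Fin

namespace Matrix

variable {R : Type*} [CommRing R] {n : ℕ}

theorem det_vandermonde_eq_det_vandermonde_succAbove_mul (v : Fin (n + 1) → R)
    (j : Fin (n + 1)) :
    (vandermonde v).det = (vandermonde (v ∘ j.succAbove)).det *
      ((∏ i ∈ Iio j, (v j - v i)) * ∏ i ∈ Ioi j, (v i - v j)) := by
  simp only [det_vandermonde]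
  exact Fin.prod_prod_Ioi_succAbove (fun a b => v b - v a) j

theorem det_vandermonde_snoc (v : Fin n → R) (x : R) :
    (vandermonde (Fin.snoc v x : Fin (n + 1) → R)).det =
      (vandermonde v).det * ∏ i, (x - v i) := by
  rw [det_vandermonde_eq_det_vandermonde_succAbove_mul _ (Fin.last n), Fin.prod_Iio_eq_prod_ite,
    Fin.prod_univ_castSucc]
  simp [Fin.succAbove_last, Function.comp_def, Fin.castSucc_lt_last, Fin.prod_Ioi_eq_prod_ite,
    fun b => (Fin.le_last b).not_gt]

theorem det_vandermonde_snoc_eq_sum (v : Fin n → R) (x : R) :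
    (vandermonde (Fin.snoc v x : Fin (n + 1) → R)).det =
      ∑ j : Fin (n + 1), (-1) ^ (n + j : ℕ) * x ^ (j : ℕ) *
        (of fun i k : Fin n => v i ^ (j.succAbove k : ℕ)).det := by
  rw [det_succ_row _ (Fin.last n)]
  refine sum_congr rfl fun j _ => ?_
  congr 2
  · simp
  · ext i k
    simp [Fin.succAbove_last]

theorem det_vandermonde_const_mul (a : R) (v : Fin n → R) :
    (vandermonde fun i => a * v i).det = a ^ (n * (n - 1) / 2) * (vandermonde v).det := by
  have h : (vandermonde fun i => a * v i) =
      of fun i (k : Fin n) => a ^ (k : ℕ) * vandermonde v i k := by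
    ext i k
    simp [mul_pow]
  rw [h, det_mul_row, prod_pow_eq_pow_sum, Fin.sum_univ_eq_sum_range (fun k => k), sum_range_id]

theorem det_vandermonde_natCast_succAbove [IsDomain R] [CharZero R] (j : Fin (n + 1)) :
    (vandermonde fun i => ((j.succAbove i : ℕ) : R)).det =
      (∏ l ∈ range n, (l ! : R)) * n.choose j := by
  have h := det_vandermonde_eq_det_vandermonde_succAbove_mul
    (fun i : Fin (n + 1) => ((i : ℕ) : R)) j
  rw [det_vandermonde_id_eq_superFactorial, Fin.prod_Iio_sub_eq_factorial,
    Fin.prod_Ioi_sub_eq_factorial, ← Nat.prod_range_succ_factorial, prod_range_succ,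
    ← Nat.choose_mul_factorial_mul_factorial (Nat.lt_succ_iff.mp j.isLt), Function.comp_def] at h
  push_cast at h
  have hfac : ((j : ℕ)! * (n - j : ℕ)! : R) ≠ 0 := by exact_mod_cast (by positivity)
  refine mul_right_cancel₀ hfac ?_
  rw [← h]
  ring

theorem prod_sub_mul_prod_mul_prod_Ioi_eq_sum_det_mul_det (x : R) (μ ν w : Fin n → R) :
    (∏ l, (x - ν l)) * (∏ l, w l) * ∏ a, ∏ b ∈ Ioi a, ((μ b - μ a) * (ν b - ν a)) =
      ∑ j : Fin (n + 1), (-1) ^ (n + j : ℕ) * x ^ (j : ℕ) *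
        ((of fun i k : Fin n => w i * μ i ^ (k : ℕ)).det *
          (of fun i k : Fin n => ν i ^ (j.succAbove k : ℕ)).det) := by
  have hw : (of fun i k : Fin n => w i * μ i ^ (k : ℕ)).det =
      (∏ l, w l) * (vandermonde μ).det :=
    det_mul_column w (vandermonde μ)
  have hprod : ∏ a, ∏ b ∈ Ioi a, ((μ b - μ a) * (ν b - ν a)) =
      (vandermonde μ).det * (vandermonde ν).det := by
    simp only [det_vandermonde, ← prod_mul_distrib]
  calc _ = (∏ l, w l) * (vandermonde μ).det *
        (vandermonde (Fin.snoc ν x : Fin (n + 1) → R)).det := by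
        rw [hprod, det_vandermonde_snoc]
        ring
    _ = _ := by
        rw [det_vandermonde_snoc_eq_sum, mul_sum, hw]
        exact sum_congr rfl fun j _ => by ring

variable {ι : Type*} [Fintype ι] [DecidableEq ι]

theorem det_mul_det_eq_sum_sum (A B : Matrix ι ι R) :
    A.det * B.det = ∑ σ : Perm ι, ∑ ρ : Perm ι,
      ((Perm.sign σ : ℤ) : R) * ((Perm.sign ρ : ℤ) : R) * ∏ i, (A i (σ i) * B i (ρ i)) := by
  rw [← det_transpose A, ← det_transpose B, det_apply', det_apply', sum_mul_sum]
  simp only [transpose_apply, prod_mul_distrib]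
  exact sum_congr rfl fun σ _ => sum_congr rfl fun ρ _ => by ring

theorem sum_sum_sign_mul_sign_mul_prod (M : Matrix ι ι R) :
    ∑ σ : Perm ι, ∑ ρ : Perm ι,
      ((Perm.sign σ : ℤ) : R) * ((Perm.sign ρ : ℤ) : R) * ∏ i, M (σ i) (ρ i) =
      (Fintype.card ι)! * M.det := by
  have hρ (ρ : Perm ι) : ∑ σ : Perm ι,
      ((Perm.sign σ : ℤ) : R) * ((Perm.sign ρ : ℤ) : R) * ∏ i, M (σ i) (ρ i) = M.det := by
    rw [det_apply', ← Equiv.sum_comp (Equiv.mulRight ρ)]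
    refine sum_congr rfl fun τ _ => ?_
    have hρρ : ((Perm.sign ρ : ℤ) : R) * ((Perm.sign ρ : ℤ) : R) = 1 := by
      rw [← Int.cast_mul, ← Units.val_mul, Int.units_mul_self, Units.val_one, Int.cast_one]
    rw [← Equiv.prod_comp ρ (fun i => M (τ i) i)]
    simp only [coe_mulRight, Perm.sign_mul, Units.val_mul, Int.cast_mul, Perm.mul_apply]
    linear_combination (((Perm.sign τ : ℤ) : R) * ∏ i, M (τ (ρ i)) (ρ i)) * hρρ
  rw [sum_comm, sum_congr rfl fun ρ _ => hρ ρ, sum_const, Finset.card_univ, Fintype.card_perm,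
    nsmul_eq_mul]

end Matrix

namespace MeasureTheory

variable {𝕜 : Type*} [RCLike 𝕜] {ι α : Type*} [Fintype ι] [DecidableEq ι] [MeasurableSpace α]
  {μ : Measure α} [SigmaFinite μ] {f g : ι → α → 𝕜}

theorem integrable_det_mul_det (hfg : ∀ k l, Integrable (fun t => f k t * g l t) μ) :
    Integrable (fun x : ι → α => (of fun i k => f k (x i)).det * (of fun i k => g k (x i)).det)
      (Measure.pi fun _ => μ) := by
  simp only [det_mul_det_eq_sum_sum, of_apply]
  exact integrable_finsetSum _ fun σ _ => integrable_finsetSum _ fun ρ _ =>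
    (Integrable.fintype_prod fun i => hfg (σ i) (ρ i)).const_mul _

-- Andréief's identity.
theorem integral_det_mul_det (hfg : ∀ k l, Integrable (fun t => f k t * g l t) μ) :
    ∫ x : ι → α, (of fun i k => f k (x i)).det * (of fun i k => g k (x i)).det
      ∂(Measure.pi fun _ => μ) =
      (Fintype.card ι)! * (of fun k l => ∫ t, f k t * g l t ∂μ).det := by
  have hint (σ ρ : Perm ι) := (Integrable.fintype_prod fun i => hfg (σ i) (ρ i)).const_mul
    (((Perm.sign σ : ℤ) : 𝕜) * ((Perm.sign ρ : ℤ) : 𝕜))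
  simp only [det_mul_det_eq_sum_sum, of_apply]
  rw [← sum_sum_sign_mul_sign_mul_prod,
    integral_finsetSum _ fun σ _ => integrable_finsetSum _ fun ρ _ => hint σ ρ]
  refine sum_congr rfl fun σ _ => ?_
  rw [integral_finsetSum _ fun ρ _ => hint σ ρ]
  refine sum_congr rfl fun ρ _ => ?_
  rw [integral_const_mul, integral_fintype_prod_eq_prod (fun i t => f (σ i) t * g (ρ i) t)]
  rfl

end MeasureTheory

namespace Real

open Set

theorem Gamma_add_nat_eq_mul_ascPochhammer {z : ℝ} (hz : ∀ k : ℕ, z ≠ -k) (n : ℕ) :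
    Gamma (z + n) = Gamma z * (ascPochhammer ℝ n).eval z := by
  induction n with
  | zero => simp
  | succ n ih =>
    have hzn : z + n ≠ 0 := fun h => hz n (eq_neg_of_add_eq_zero_left h)
    rw [Nat.cast_succ, ← add_assoc, Gamma_add_one hzn, ih, ascPochhammer_succ_right, eval_mul]
    simp only [eval_add, eval_X, eval_natCast]
    ring

theorem det_Gamma_add_nat {n : ℕ} (z : Fin n → ℝ) (hz : ∀ i (k : ℕ), z i ≠ -k) :
    (of fun k i : Fin n => Gamma (z i + (k : ℕ))).det =
      (∏ i, Gamma (z i)) * (vandermonde z).det := by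
  have h : (of fun k i : Fin n => Gamma (z i + (k : ℕ)))ᵀ =
      of fun i (k : Fin n) => Gamma (z i) * (ascPochhammer ℝ (k : ℕ)).eval (z i) := by
    ext i k
    exact Gamma_add_nat_eq_mul_ascPochhammer (hz i) k
  rw [← det_transpose, h, det_eval_matrixOfPolynomials_eq_det_vandermonde z
    (fun k => ascPochhammer ℝ k) (fun k => ascPochhammer_natDegree ℝ k)
    (fun k => monic_ascPochhammer ℝ k)]
  exact det_mul_column (fun i => Gamma (z i))
    (of fun i (k : Fin n) => (ascPochhammer ℝ k).eval (z i))

variable {θ c : ℝ} {k m : ℕ}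

theorem eqOn_rpow_mul_exp_neg_mul_pow_mul_rpow_pow :
    EqOn (fun t => t ^ c * exp (-t) * t ^ k * (t ^ θ) ^ m)
      (fun t => exp (-t) * t ^ (θ * m + c + 1 + k - 1)) (Ioi 0) := by
  intro t (ht : 0 < t)
  simp only
  rw [← rpow_natCast, ← rpow_natCast, ← rpow_mul ht.le,
    show θ * m + c + 1 + k - 1 = c + k + θ * m by ring, rpow_add ht, rpow_add ht]
  ring

theorem integrableOn_rpow_mul_exp_neg_mul_pow_mul_rpow_pow (hs : 0 < θ * m + c + 1 + k) :
    IntegrableOn (fun t => t ^ c * exp (-t) * t ^ k * (t ^ θ) ^ m) (Ioi 0) :=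
  (GammaIntegral_convergent hs).congr_fun eqOn_rpow_mul_exp_neg_mul_pow_mul_rpow_pow.symm
    measurableSet_Ioi

theorem integral_rpow_mul_exp_neg_mul_pow_mul_rpow_pow (hs : 0 < θ * m + c + 1 + k) :
    ∫ t in Ioi 0, t ^ c * exp (-t) * t ^ k * (t ^ θ) ^ m = Gamma (θ * m + c + 1 + k) := by
  rw [Gamma_eq_integral hs]
  exact setIntegral_congr_fun measurableSet_Ioi eqOn_rpow_mul_exp_neg_mul_pow_mul_rpow_pow

end Real

section Laguerre

variable {N : ℕ} {θ c : ℝ}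

theorem integrable_laguerre_det_mul_det (hs : ∀ k m : ℕ, 0 < θ * m + c + 1 + k)
    (j : Fin (N + 1)) (k l : Fin N) :
    Integrable (fun t : ℝ => t ^ c * Real.exp (-t) * t ^ (k : ℕ) * (t ^ θ) ^ (j.succAbove l : ℕ))
      (volume.restrict (Set.Ioi 0)) :=
  Real.integrableOn_rpow_mul_exp_neg_mul_pow_mul_rpow_pow (hs _ _)

theorem integral_laguerre_det_mul_det (hs : ∀ k m : ℕ, 0 < θ * m + c + 1 + k)
    (j : Fin (N + 1)) :
    ∫ lam, (of fun i (k : Fin N) => lam i ^ c * Real.exp (-lam i) * lam i ^ (k : ℕ)).det *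
        (of fun i (k : Fin N) => (lam i ^ θ) ^ (j.succAbove k : ℕ)).det
        ∂(Measure.pi fun _ => volume.restrict (Set.Ioi 0)) =
      N ! * ((∏ i : Fin N, Real.Gamma (θ * (j.succAbove i : ℕ) + c + 1)) *
        (θ ^ (N * (N - 1) / 2) * ((∏ l ∈ range N, (l ! : ℝ)) * N.choose j))) := by
  refine (integral_det_mul_det (f := fun (k : Fin N) t => t ^ c * Real.exp (-t) * t ^ (k : ℕ))
    (g := fun (k : Fin N) t => (t ^ θ) ^ (j.succAbove k : ℕ))
    (integrable_laguerre_det_mul_det hs j)).trans ?_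
  simp only [Fintype.card_fin, Real.integral_rpow_mul_exp_neg_mul_pow_mul_rpow_pow (hs _ _)]
  rw [Real.det_Gamma_add_nat (fun i => θ * (j.succAbove i : ℕ) + c + 1)
    fun i k h => by linarith [hs k (j.succAbove i)]]
  simp only [det_vandermonde_add, det_vandermonde_const_mul, det_vandermonde_natCast_succAbove]

end Laguerre

theorem stmt_7_general (N : ℕ) (θ c : ℝ) (hθ : 0 < θ) (hc : -1 < c)
    (q : ℝ → ℝ)
    (hq : ∀ y : ℝ, q y =
      (-1 : ℝ) ^ N * Real.Gamma (θ * N + c + 1) *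
        ∑ l ∈ Finset.range (N + 1),
          (-1 : ℝ) ^ l * (N.choose l : ℝ) * y ^ l / Real.Gamma (θ * l + c + 1))
    (x : ℝ) :
    ∫ lam in {lam : Fin N → ℝ | ∀ i, 0 < lam i},
      (∏ l, (x - lam l ^ θ)) * (∏ l, lam l ^ c * Real.exp (-lam l)) *
        ∏ j, ∏ k ∈ Finset.Ioi j, ((lam k - lam j) * (lam k ^ θ - lam j ^ θ))
    = (N.factorial : ℝ) * (∏ l : Fin N, Real.Gamma (θ * (l : ℝ) + c + 1)) *
        θ ^ (N * (N - 1) / 2) * (∏ l ∈ Finset.range N, (Nat.factorial l : ℝ)) * q x := by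
  have hs (k m : ℕ) : 0 < θ * m + c + 1 + k := by
    have := mul_nonneg hθ.le m.cast_nonneg
    have := k.cast_nonneg (α := ℝ)
    linarith
  have hS : {lam : Fin N → ℝ | ∀ i, 0 < lam i} = Set.univ.pi fun _ => Set.Ioi 0 := by ext; simp
  simp only [prod_sub_mul_prod_mul_prod_Ioi_eq_sum_det_mul_det]
  rw [hS, volume_pi, Measure.restrict_pi_pi, integral_finsetSum _ fun j _ =>
    (integrable_det_mul_det (integrable_laguerre_det_mul_det hs j)).const_mul _]
  simp only [integral_const_mul, integral_laguerre_det_mul_det hs]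
  rw [hq, ← Fin.sum_univ_eq_sum_range
    (fun l => (-1 : ℝ) ^ l * (N.choose l : ℝ) * x ^ l / Real.Gamma (θ * l + c + 1))]
  simp only [mul_sum]
  refine sum_congr rfl fun j _ => ?_
  have hΓ := Fin.prod_val_succAbove_mul (fun l : ℕ => Real.Gamma (θ * l + c + 1)) j
  have hΓj : Real.Gamma (θ * (j : ℕ) + c + 1) ≠ 0 :=
    (Real.Gamma_pos_of_pos (by simpa using hs 0 j)).ne'
  field_simp
  rw [pow_add]
  linear_combination ((-1) ^ N * (-1) ^ (j : ℕ) * x ^ (j : ℕ) * N.choose j) * hΓ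

/-- the averaged characteristic polynomial (in the variables `λ_l^θ`)
of the Laguerre Muttalib–Borodin ensemble is Konhauser's biorthogonal polynomial `q_N`. -/
theorem stmt_7 (N : ℕ) (hN : 1 ≤ N) (θ c : ℝ) (hθ : 0 < θ) (hc : -1 < c)
    (q : ℝ → ℝ)
    (hq : ∀ y : ℝ, q y =
      (-1 : ℝ) ^ N * Real.Gamma (θ * N + c + 1) *
        ∑ l ∈ Finset.range (N + 1),
          (-1 : ℝ) ^ l * (N.choose l : ℝ) * y ^ l / Real.Gamma (θ * l + c + 1))
    (x : ℝ) :
    ∫ lam in {lam : Fin N → ℝ | ∀ i, 0 < lam i},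
      (∏ l, (x - lam l ^ θ)) * (∏ l, lam l ^ c * Real.exp (-lam l)) *
        ∏ j, ∏ k ∈ Finset.Ioi j, ((lam k - lam j) * (lam k ^ θ - lam j ^ θ))
    = (N.factorial : ℝ) * (∏ l : Fin N, Real.Gamma (θ * (l : ℝ) + c + 1)) *
        θ ^ (N * (N - 1) / 2) * (∏ l ∈ Finset.range N, (Nat.factorial l : ℝ)) * q x :=
  stmt_7_general N θ c hθ hc q hq x
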